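/- (Theorem 3.1(1)) Assume 0 < μ < √a, (1−τ)μ² < λᵢ + τa for i = 1,2 whenever τ < 1, and b + χ₂μ₂ − χ₁μ₁ > M̄ + c_μτK. Set C̃₀ := a/(b + χ₂μ₂ − χ₁μ₁ − M̄ − c_μτK). Then for every C₀ ≥ C̃₀, every admissible μ̃ and d, and every u ∈ E_{τ,μ}(C₀), one has for all x ∈ ℝ: a + (χ₂λ₂V₂(x;u) − χ₁λ₁V₁(x;u)) + c_μτ·d/dx(χ₁V₁ − χ₂V₂)(x;u) − (b + χ₂μ₂ − χ₁μ₁)·C₀ ≤ 0; consequently the constant function C₀ is a super-solution of the associated parabolic equation. -/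

import Mathlib

open MeasureTheory

/-- Vᵢ(x;u), with c_μ = μ + a/μ; `lam` is λᵢ, `m` is μᵢ. -/
noncomputable def Vfun (a τ lam m μ : ℝ) (u : ℝ → ℝ) (x : ℝ) : ℝ :=
  m * ∫ s in Set.Ioi (0 : ℝ), ∫ z : ℝ,
    Real.exp (-lam * s) / Real.sqrt (4 * Real.pi * s) *
      Real.exp (-(x - z) ^ 2 / (4 * s)) * u (z + τ * (μ + a / μ) * s)

/-- u ∈ E_{τ,μ}(C₀). -/
def memE (C₀ μ μt d : ℝ) (u : ℝ → ℝ) : Prop :=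
  Continuous u ∧ ∀ x : ℝ,
    max 0 (Real.exp (-μ * x) - d * Real.exp (-μt * x)) ≤ u x ∧
    u x ≤ min C₀ (Real.exp (-μ * x))

/-- M̄ := ∫₀^∞ (χ₂λ₂μ₂e^{−λ₂s} − χ₁λ₁μ₁e^{−λ₁s})₊ ds -/
noncomputable def Mbar (χ₁ χ₂ lam₁ lam₂ μ₁ μ₂ : ℝ) : ℝ :=
  ∫ s in Set.Ioi (0 : ℝ),
    max 0 (χ₂ * lam₂ * μ₂ * Real.exp (-lam₂ * s) - χ₁ * lam₁ * μ₁ * Real.exp (-lam₁ * s))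

/-- K := ∫₀^∞ |χ₁μ₁e^{−λ₁s} − χ₂μ₂e^{−λ₂s}|/(2√(πs)) ds -/
noncomputable def Kconst (χ₁ χ₂ lam₁ lam₂ μ₁ μ₂ : ℝ) : ℝ :=
  ∫ s in Set.Ioi (0 : ℝ),
    |χ₁ * μ₁ * Real.exp (-lam₁ * s) - χ₂ * μ₂ * Real.exp (-lam₂ * s)| /
      (2 * Real.sqrt (Real.pi * s))

/-!
Both Vᵢ are time averages of the heat semigroup applied to shifts of `u`:
`Vᵢ(x;u) = μᵢ ∫₀^∞ e^{-λᵢ s} (e^{sΔ} u(· + τ c_μ s))(x) ds`. Since `0 ≤ u ≤ C₀` and the heat kernel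
is a probability density, `0 ≤ e^{sΔ} u(· + τ c_μ s) ≤ C₀`, which gives
`χ₂λ₂V₂ − χ₁λ₁V₁ ≤ M̄ C₀`. Differentiating under the integral, `∂ₓ e^{sΔ} f` integrates `f` against
`(z - x)/(2s)` times the kernel, and for `0 ≤ f ≤ C₀` this is at most `C₀/(2√(πs))` in absolute
value, so `∂ₓ(χ₁V₁ − χ₂V₂) ≤ C₀ K`. The left-hand side is then at most
`a − C₀ (b + χ₂μ₂ − χ₁μ₁ − M̄ − c_μτK)`, which is `≤ 0` because `C₀ ≥ C̃₀`.
-/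

open Real Set Filter Topology ProbabilityTheory

noncomputable section

-- The variance `(2 * s).toNNReal` is `0` for `s ≤ 0`, where the kernel vanishes.
def heatKernel (s x : ℝ) : ℝ → ℝ := gaussianPDFReal x (2 * s).toNNReal

lemma heatKernel_apply {s : ℝ} (hs : 0 ≤ s) (x z : ℝ) :
    heatKernel s x z = exp (-(x - z) ^ 2 / (4 * s)) / √(4 * π * s) := by
  rw [heatKernel, gaussianPDFReal, Real.coe_toNNReal _ (by positivity), ← neg_sub z x]
  ring_nf

lemma heatKernel_sub (s x z : ℝ) : heatKernel s 0 (z - x) = heatKernel s x z := by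
  rw [heatKernel, gaussianPDFReal_sub, zero_add, heatKernel]

lemma heatKernel_neg (s t : ℝ) : heatKernel s 0 (-t) = heatKernel s 0 t := by
  simp [heatKernel, gaussianPDFReal]

@[fun_prop]
lemma measurable_heatKernel_uncurry (x : ℝ) : Measurable fun p : ℝ × ℝ => heatKernel p.1 x p.2 := by
  unfold heatKernel
  fun_prop

@[fun_prop]
lemma measurable_heatKernel (s x : ℝ) : Measurable (heatKernel s x) := by
  unfold heatKernel
  fun_prop

lemma heatKernel_nonneg (s x z : ℝ) : 0 ≤ heatKernel s x z :=
  gaussianPDFReal_nonneg _ _ _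

lemma integrable_heatKernel (s x : ℝ) : Integrable (heatKernel s x) :=
  integrable_gaussianPDFReal _ _

lemma integral_heatKernel {s : ℝ} (hs : 0 < s) (x : ℝ) : ∫ z, heatKernel s x z = 1 :=
  integral_gaussianPDFReal_eq_one _ (by simpa using hs)

lemma heatKernel_zero_apply {s : ℝ} (hs : 0 ≤ s) (t : ℝ) :
    heatKernel s 0 t = (√(4 * π * s))⁻¹ * exp (-(4 * s)⁻¹ * t ^ 2) := by
  rw [heatKernel_apply hs]
  ring_nf

lemma hasDerivAt_heatKernel {s : ℝ} (hs : 0 < s) (y z : ℝ) :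
    HasDerivAt (fun y => heatKernel s y z) ((z - y) / (2 * s) * heatKernel s y z) y := by
  have h := ((((hasDerivAt_id' y).sub_const z).fun_pow 2).fun_neg.div_const (4 * s)).exp.div_const
    (√(4 * π * s))
  simp only [heatKernel_apply hs.le]
  refine h.congr_deriv ?_
  norm_num
  field_simp
  ring

lemma integral_Ioi_mul_exp_neg_mul_sq {b : ℝ} (hb : 0 < b) :
    ∫ t in Ioi (0 : ℝ), t * exp (-b * t ^ 2) = (2 * b)⁻¹ := by
  exact_mod_cast integral_mul_cexp_neg_mul_sq (b := (b : ℂ)) (by simpa using hb)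

lemma integrable_abs_mul_heatKernel {s : ℝ} (hs : 0 < s) (x : ℝ) :
    Integrable fun z => |z - x| * heatKernel s x z := by
  have h := ((integrable_mul_exp_neg_mul_sq (b := (4 * s)⁻¹) (by positivity)).norm.const_mul
    (√(4 * π * s))⁻¹).comp_sub_right x
  refine h.congr (ae_of_all _ fun z => ?_)
  simp only [← heatKernel_sub s x z, heatKernel_zero_apply hs.le, norm_mul, Real.norm_eq_abs,
    abs_of_pos (exp_pos _)]
  ring

lemma integral_posPart_mul_heatKernel {s : ℝ} (hs : 0 < s) :
    ∫ t, max t 0 * heatKernel s 0 t = s / √(π * s) := by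
  have hzero : ∀ t ∉ Ioi (0 : ℝ), max t 0 * heatKernel s 0 t = 0 := fun t ht => by
    rw [max_eq_right (not_lt.1 ht), zero_mul]
  rw [← setIntegral_eq_integral_of_forall_compl_eq_zero hzero,
    setIntegral_congr_fun measurableSet_Ioi fun t (ht : 0 < t) => by
      rw [max_eq_left ht.le, heatKernel_zero_apply hs.le, mul_left_comm],
    integral_const_mul, integral_Ioi_mul_exp_neg_mul_sq (by positivity),
    show 4 * π * s = 2 ^ 2 * (π * s) by ring, sqrt_mul (by norm_num), sqrt_sq (by norm_num)]
  field_simp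
  norm_num

lemma integrable_posPart_mul_heatKernel {s : ℝ} (hs : 0 < s) :
    Integrable fun t => max t 0 * heatKernel s 0 t := by
  refine (integrable_abs_mul_heatKernel hs 0).mono' (by fun_prop) (ae_of_all _ fun t => ?_)
  rw [sub_zero, norm_mul, Real.norm_of_nonneg (le_max_right _ _),
    Real.norm_of_nonneg (heatKernel_nonneg _ _ _)]
  exact mul_le_mul_of_nonneg_right (max_le (le_abs_self t) (abs_nonneg t)) (heatKernel_nonneg ..)

lemma heatKernel_le_of_abs_sub_le_one {s x y : ℝ} (hs : 0 < s) (hxy : |y - x| ≤ 1) (z : ℝ) :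
    heatKernel s y z ≤ √2 * exp (4 * s)⁻¹ * heatKernel (2 * s) x z := by
  have hexp :
      exp (-(y - z) ^ 2 / (4 * s)) ≤ exp (4 * s)⁻¹ * exp (-(x - z) ^ 2 / (4 * (2 * s))) := by
    rw [← exp_add, exp_le_exp, ← sub_nonneg]
    have : (x - z) ^ 2 ≤ 2 * (y - z) ^ 2 + 2 := by
      nlinarith [sq_nonneg (x + z - 2 * y), abs_le.1 hxy]
    field_simp
    nlinarith
  rw [heatKernel_apply hs.le, heatKernel_apply (by positivity),
    show 4 * π * (2 * s) = 2 * (4 * π * s) by ring, sqrt_mul zero_le_two]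
  calc _ ≤ exp (4 * s)⁻¹ * exp (-(x - z) ^ 2 / (4 * (2 * s))) / √(4 * π * s) := by gcongr
    _ = _ := by field_simp

def heatSemigroup (s : ℝ) (f : ℝ → ℝ) (x : ℝ) : ℝ := ∫ z, heatKernel s x z * f z

def heatSemigroupDeriv (s : ℝ) (f : ℝ → ℝ) (x : ℝ) : ℝ :=
  ∫ z, (z - x) / (2 * s) * heatKernel s x z * f z

section

variable {s C : ℝ} {f : ℝ → ℝ}

lemma integrable_heatKernel_mul (hf : AEStronglyMeasurable f) (hfC : ∀ z, |f z| ≤ C)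
    (x : ℝ) : Integrable fun z => heatKernel s x z * f z :=
  (integrable_heatKernel s x).mul_bdd hf (ae_of_all _ hfC)

lemma heatSemigroup_mem_Icc (hs : 0 < s) (hf : AEStronglyMeasurable f) (hfC : ∀ z, f z ∈ Icc 0 C)
    (x : ℝ) : heatSemigroup s f x ∈ Icc 0 C := by
  refine ⟨integral_nonneg fun z => mul_nonneg (heatKernel_nonneg ..) (hfC z).1, ?_⟩
  have hint := integrable_heatKernel_mul (s := s) hf
    (fun z => (abs_of_nonneg (hfC z).1).trans_le (hfC z).2) x
  calc heatSemigroup s f x ≤ ∫ z, heatKernel s x z * C :=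
        integral_mono hint ((integrable_heatKernel s x).mul_const C) fun z =>
          mul_le_mul_of_nonneg_left (hfC z).2 (heatKernel_nonneg ..)
    _ = C := by rw [integral_mul_const, integral_heatKernel hs, one_mul]

lemma hasDerivAt_heatSemigroup (hs : 0 < s) (hf : AEStronglyMeasurable f)
    (hfC : ∀ z, |f z| ≤ C) (x : ℝ) :
    HasDerivAt (heatSemigroup s f) (heatSemigroupDeriv s f x) x := by
  set bound := fun z => C / (2 * s) * (√2 * exp (4 * s)⁻¹) *
    (|z - x| * heatKernel (2 * s) x z + heatKernel (2 * s) x z)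
  have hbound : Integrable bound :=
    ((integrable_abs_mul_heatKernel (by positivity) x).add
      (integrable_heatKernel (2 * s) x)).const_mul _
  have hle : ∀ z, ∀ y ∈ Metric.ball x 1,
      ‖(z - y) / (2 * s) * heatKernel s y z * f z‖ ≤ bound z := by
    intro z y hy
    have hxy : |y - x| ≤ 1 := (Real.dist_eq y x ▸ Metric.mem_ball.1 hy).le
    rw [norm_mul, norm_mul, norm_div, Real.norm_of_nonneg (heatKernel_nonneg ..),
      Real.norm_eq_abs, Real.norm_eq_abs, abs_of_pos (by positivity : (0 : ℝ) < 2 * s)]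
    have hzy : |z - y| ≤ |z - x| + 1 := by
      calc |z - y| ≤ |z - x| + |y - x| := by rw [abs_sub_comm y x]; exact abs_sub_le z x y
        _ ≤ |z - x| + 1 := by linarith
    have hC : 0 ≤ C := (abs_nonneg _).trans (hfC 0)
    calc |z - y| / (2 * s) * heatKernel s y z * |f z|
        ≤ (|z - x| + 1) / (2 * s) * (√2 * exp (4 * s)⁻¹ * heatKernel (2 * s) x z) * C := by
          have hK := heatKernel_le_of_abs_sub_le_one hs hxy z
          have hfz := hfC z
          gcongr
          · exact mul_nonneg (by positivity) (mul_nonneg (by positivity) (heatKernel_nonneg ..))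
          · exact heatKernel_nonneg ..
      _ = bound z := by simp only [bound]; ring
  exact (hasDerivAt_integral_of_dominated_loc_of_deriv_le (Metric.ball_mem_nhds x one_pos)
    (Eventually.of_forall fun y => by fun_prop) (integrable_heatKernel_mul hf hfC x) (by fun_prop)
    (ae_of_all _ fun z y hy => hle z y hy) hbound
    (ae_of_all _ fun z y _ => (hasDerivAt_heatKernel hs y z).mul_const (f z))).2

lemma integrable_heatSemigroupDeriv_integrand (hs : 0 < s) (hf : AEStronglyMeasurable f)
    (hfC : ∀ z, |f z| ≤ C) (x : ℝ) :
    Integrable fun z => (z - x) / (2 * s) * heatKernel s x z * f z := by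
  refine ((integrable_abs_mul_heatKernel hs x).const_mul (C / (2 * s))).mono' (by fun_prop)
    (ae_of_all _ fun z => ?_)
  have hC : 0 ≤ C := (abs_nonneg _).trans (hfC 0)
  rw [norm_mul, norm_mul, norm_div, Real.norm_of_nonneg (heatKernel_nonneg ..),
    Real.norm_of_nonneg (by positivity : (0 : ℝ) ≤ 2 * s), Real.norm_eq_abs, Real.norm_eq_abs]
  calc |z - x| / (2 * s) * heatKernel s x z * |f z| ≤ |z - x| / (2 * s) * heatKernel s x z * C :=
        mul_le_mul_of_nonneg_left (hfC z) (mul_nonneg (by positivity) (heatKernel_nonneg ..))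
    _ = C / (2 * s) * (|z - x| * heatKernel s x z) := by ring

lemma abs_heatSemigroupDeriv_le (hs : 0 < s) (hf : AEStronglyMeasurable f)
    (hfC : ∀ z, f z ∈ Icc 0 C) (x : ℝ) :
    |heatSemigroupDeriv s f x| ≤ C / (2 * √(π * s)) := by
  have hint := integrable_heatSemigroupDeriv_integrand hs hf
    (fun z => (abs_of_nonneg (hfC z).1).trans_le (hfC z).2) x
  have hpos := integrable_posPart_mul_heatKernel hs
  -- `0 ≤ f ≤ C` gives `t * f z ≤ t₊ * C` for either sign of `t = ±(z - x)`, which is half of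
  -- what `|f| ≤ C` alone would give
  have hpt : ∀ z t, t / (2 * s) * heatKernel s x z * f z ≤
      C / (2 * s) * (max t 0 * heatKernel s x z) := fun z t => by
    have : t * f z ≤ max t 0 * C := (mul_le_mul_of_nonneg_right (le_max_left t 0) (hfC z).1).trans
      (mul_le_mul_of_nonneg_left (hfC z).2 (le_max_right t 0))
    have hK := heatKernel_nonneg s x z
    calc t / (2 * s) * heatKernel s x z * f z = heatKernel s x z / (2 * s) * (t * f z) := by ring
      _ ≤ heatKernel s x z / (2 * s) * (max t 0 * C) := by gcongr
      _ = C / (2 * s) * (max t 0 * heatKernel s x z) := by ring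
  have hval : C / (2 * s) * ∫ t, max t 0 * heatKernel s 0 t = C / (2 * √(π * s)) := by
    rw [integral_posPart_mul_heatKernel hs]
    field_simp
  rw [abs_le, ← hval]
  constructor
  · rw [neg_le, ← integral_sub_left_eq_self _ volume x, ← integral_const_mul, heatSemigroupDeriv,
      ← integral_neg]
    refine integral_mono hint.neg ((hpos.comp_sub_left x).const_mul _) fun z => ?_
    rw [← neg_sub z x, heatKernel_neg, heatKernel_sub, neg_sub z x]
    calc _ = (x - z) / (2 * s) * heatKernel s x z * f z := by ring
      _ ≤ _ := hpt z (x - z)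
  · rw [← integral_sub_right_eq_self _ x, ← integral_const_mul]
    refine integral_mono hint ((hpos.comp_sub_right x).const_mul _) fun z => ?_
    rw [heatKernel_sub]
    exact hpt z (z - x)

end

section

variable {α : Type*} [MeasurableSpace α] {μ : Measure α}

lemma integral_mul_le_integral_posPart_mul {g φ : α → ℝ} {C : ℝ} (hg : Integrable g μ)
    (hφ : AEStronglyMeasurable φ μ) (hφC : ∀ᵐ a ∂μ, φ a ∈ Icc 0 C) :
    ∫ a, g a * φ a ∂μ ≤ (∫ a, max 0 (g a) ∂μ) * C := by
  rw [← integral_mul_const]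
  refine integral_mono_ae (hg.mul_bdd (c := C) hφ (hφC.mono fun a ha => ?_)) ?_
    (hφC.mono fun a ha => ?_)
  · rw [Real.norm_of_nonneg ha.1]; exact ha.2
  · simpa only [max_comm] using hg.pos_part.mul_const C
  · exact (mul_le_mul_of_nonneg_right (le_max_right 0 (g a)) ha.1).trans
      (mul_le_mul_of_nonneg_left ha.2 (le_max_left 0 (g a)))

lemma abs_deriv_integral_mul_le {g b : α → ℝ} {F F' : ℝ → α → ℝ} {x : ℝ}
    (hg : AEStronglyMeasurable g μ) (hF : ∀ y, AEStronglyMeasurable (F y) μ)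
    (hF_int : Integrable (fun a => g a * F x a) μ) (hF' : AEStronglyMeasurable (F' x) μ)
    (h_diff : ∀ᵐ a ∂μ, ∀ y, HasDerivAt (F · a) (F' y a) y)
    (h_bound : ∀ᵐ a ∂μ, ∀ y, |F' y a| ≤ b a) (hb : Integrable (fun a => |g a| * b a) μ) :
    |deriv (fun y => ∫ a, g a * F y a ∂μ) x| ≤ ∫ a, |g a| * b a ∂μ := by
  obtain ⟨hint, hderiv⟩ := hasDerivAt_integral_of_dominated_loc_of_deriv_le
    (F := fun y a => g a * F y a) (F' := fun y a => g a * F' y a) (univ_mem (f := 𝓝 x))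
    (Eventually.of_forall fun y => hg.mul (hF y)) hF_int (hg.mul hF')
    (h_bound.mono fun a ha y _ => by
      rw [norm_mul, Real.norm_eq_abs, Real.norm_eq_abs]
      exact mul_le_mul_of_nonneg_left (ha y) (abs_nonneg _)) hb
    (h_diff.mono fun a ha y _ => (ha y).const_mul (g a))
  rw [hderiv.deriv]
  refine (abs_integral_le_integral_abs).trans (integral_mono_ae hint.abs hb
    (h_bound.mono fun a ha => ?_))
  simp only [abs_mul]
  exact mul_le_mul_of_nonneg_left (ha x) (abs_nonneg _)

end

lemma stronglyMeasurable_heatSemigroup {F : ℝ → ℝ → ℝ} (hF : Measurable (Function.uncurry F))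
    (x : ℝ) : StronglyMeasurable fun s => heatSemigroup s (F s) x := by
  have : Measurable fun p : ℝ × ℝ => heatKernel p.1 x p.2 * F p.1 p.2 :=
    (measurable_heatKernel_uncurry x).mul hF
  exact this.stronglyMeasurable.integral_prod_right'

lemma stronglyMeasurable_heatSemigroupDeriv {F : ℝ → ℝ → ℝ}
    (hF : Measurable (Function.uncurry F)) (x : ℝ) :
    StronglyMeasurable fun s => heatSemigroupDeriv s (F s) x := by
  have : Measurable fun p : ℝ × ℝ => (p.2 - x) / (2 * p.1) * heatKernel p.1 x p.2 * F p.1 p.2 :=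
    (by fun_prop : Measurable fun p : ℝ × ℝ => (p.2 - x) / (2 * p.1) * heatKernel p.1 x p.2).mul hF
  exact this.stronglyMeasurable.integral_prod_right'

lemma integrableOn_exp_neg_mul_div_sqrt {l : ℝ} (hl : 0 < l) :
    IntegrableOn (fun s => exp (-l * s) / √s) (Ioi 0) := by
  refine (integrableOn_rpow_mul_exp_neg_mul_rpow (s := -(1 / 2)) (p := 1) (by norm_num) one_pos
    hl).congr_fun (fun s (hs : 0 < s) => ?_) measurableSet_Ioi
  dsimp only
  rw [rpow_one, rpow_neg hs.le, ← sqrt_eq_rpow, div_eq_inv_mul]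

lemma integrableOn_abs_sub_div_sqrt {c₁ c₂ l₁ l₂ : ℝ} (hl₁ : 0 < l₁) (hl₂ : 0 < l₂) :
    IntegrableOn (fun s => |c₁ * exp (-l₁ * s) - c₂ * exp (-l₂ * s)| / (2 * √(π * s))) (Ioi 0) := by
  refine (((integrableOn_exp_neg_mul_div_sqrt hl₁).const_mul (|c₁| / (2 * √π))).add
    ((integrableOn_exp_neg_mul_div_sqrt hl₂).const_mul (|c₂| / (2 * √π)))).mono'
    (by fun_prop : Measurable _).aestronglyMeasurable
    (ae_restrict_of_forall_mem measurableSet_Ioi fun s (hs : 0 < s) => ?_)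
  rw [Real.norm_of_nonneg (by positivity), sqrt_mul pi_pos.le, div_le_iff₀ (by positivity)]
  calc |c₁ * exp (-l₁ * s) - c₂ * exp (-l₂ * s)| ≤ |c₁| * exp (-l₁ * s) + |c₂| * exp (-l₂ * s) :=
        (abs_sub _ _).trans_eq (by rw [abs_mul, abs_mul, abs_exp, abs_exp])
    _ = _ := by simp only [Pi.add_apply]; field_simp

lemma integrableOn_mul_heatSemigroup {g : ℝ → ℝ} {F : ℝ → ℝ → ℝ} {C : ℝ}
    (hg : IntegrableOn g (Ioi 0)) (hF : Measurable (Function.uncurry F))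
    (hFC : ∀ s z, F s z ∈ Icc 0 C) (x : ℝ) :
    IntegrableOn (fun s => g s * heatSemigroup s (F s) x) (Ioi 0) :=
  hg.mul_bdd (c := C) (stronglyMeasurable_heatSemigroup hF x).aestronglyMeasurable
    (ae_restrict_of_forall_mem measurableSet_Ioi fun s (hs : 0 < s) => by
      have h := heatSemigroup_mem_Icc (f := F s) hs
        (hF.comp measurable_prodMk_left).aestronglyMeasurable (hFC s) x
      rw [Real.norm_of_nonneg h.1]
      exact h.2)

lemma Vfun_eq (a τ lam m μ : ℝ) (u : ℝ → ℝ) (x : ℝ) :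
    Vfun a τ lam m μ u x = m * ∫ s in Ioi 0,
      exp (-lam * s) * heatSemigroup s (fun z => u (z + τ * (μ + a / μ) * s)) x := by
  rw [Vfun]
  congr 1
  refine setIntegral_congr_fun measurableSet_Ioi fun s (hs : 0 < s) => ?_
  rw [heatSemigroup, ← integral_const_mul]
  congr 1 with z
  rw [heatKernel_apply hs.le]
  ring

lemma mul_Vfun_sub_mul_Vfun {a τ μ C l₁ l₂ : ℝ} {u : ℝ → ℝ} (hl₁ : 0 < l₁) (hl₂ : 0 < l₂)
    (hu : Continuous u) (huC : ∀ z, u z ∈ Icc 0 C) (c₁ c₂ m₁ m₂ x : ℝ) :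
    c₁ * Vfun a τ l₁ m₁ μ u x - c₂ * Vfun a τ l₂ m₂ μ u x = ∫ s in Ioi 0,
      (c₁ * m₁ * exp (-l₁ * s) - c₂ * m₂ * exp (-l₂ * s)) *
        heatSemigroup s (fun z => u (z + τ * (μ + a / μ) * s)) x := by
  have hF : Measurable (Function.uncurry fun s z => u (z + τ * (μ + a / μ) * s)) := by
    fun_prop
  have hint : ∀ {l}, 0 < l → IntegrableOn (fun s =>
      exp (-l * s) * heatSemigroup s (fun z => u (z + τ * (μ + a / μ) * s)) x) (Ioi 0) :=
    fun hl => integrableOn_mul_heatSemigroup (exp_neg_integrableOn_Ioi 0 hl) hF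
      (fun _ _ => huC _) x
  rw [Vfun_eq, Vfun_eq, ← mul_assoc, ← mul_assoc, ← integral_const_mul, ← integral_const_mul,
    ← integral_sub ((hint hl₁).const_mul _) ((hint hl₂).const_mul _)]
  congr 1 with s
  ring

lemma mul_Vfun_sub_mul_Vfun_le {a τ μ C l₁ l₂ : ℝ} {u : ℝ → ℝ} (hl₁ : 0 < l₁) (hl₂ : 0 < l₂)
    (hu : Continuous u) (huC : ∀ z, u z ∈ Icc 0 C) (c₁ c₂ m₁ m₂ x : ℝ) :
    c₁ * Vfun a τ l₁ m₁ μ u x - c₂ * Vfun a τ l₂ m₂ μ u x ≤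
      (∫ s in Ioi 0, max 0 (c₁ * m₁ * exp (-l₁ * s) - c₂ * m₂ * exp (-l₂ * s))) * C := by
  have hF : Measurable (Function.uncurry fun s z => u (z + τ * (μ + a / μ) * s)) := by
    fun_prop
  rw [mul_Vfun_sub_mul_Vfun hl₁ hl₂ hu huC]
  exact integral_mul_le_integral_posPart_mul
    (((exp_neg_integrableOn_Ioi 0 hl₁).const_mul _).sub
      ((exp_neg_integrableOn_Ioi 0 hl₂).const_mul _))
    (stronglyMeasurable_heatSemigroup hF x).aestronglyMeasurable
    (ae_restrict_of_forall_mem measurableSet_Ioi fun s hs =>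
      heatSemigroup_mem_Icc hs (by fun_prop) (fun _ => huC _) x)

lemma abs_deriv_mul_Vfun_sub_mul_Vfun_le {a τ μ C l₁ l₂ : ℝ} {u : ℝ → ℝ} (hl₁ : 0 < l₁)
    (hl₂ : 0 < l₂) (hu : Continuous u) (huC : ∀ z, u z ∈ Icc 0 C) (c₁ c₂ m₁ m₂ x : ℝ) :
    |deriv (fun y => c₁ * Vfun a τ l₁ m₁ μ u y - c₂ * Vfun a τ l₂ m₂ μ u y) x| ≤
      C * ∫ s in Ioi 0, |c₁ * m₁ * exp (-l₁ * s) - c₂ * m₂ * exp (-l₂ * s)| / (2 * √(π * s)) := by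
  have hF : Measurable (Function.uncurry fun s z => u (z + τ * (μ + a / μ) * s)) := by
    fun_prop
  simp_rw [mul_Vfun_sub_mul_Vfun hl₁ hl₂ hu huC]
  refine abs_deriv_integral_mul_le
    (g := fun s => c₁ * m₁ * exp (-l₁ * s) - c₂ * m₂ * exp (-l₂ * s)) (by fun_prop)
    (fun y => (stronglyMeasurable_heatSemigroup hF y).aestronglyMeasurable)
    (integrableOn_mul_heatSemigroup (((exp_neg_integrableOn_Ioi 0 hl₁).const_mul _).sub
      ((exp_neg_integrableOn_Ioi 0 hl₂).const_mul _)) hF (fun _ _ => huC _) x)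
    (stronglyMeasurable_heatSemigroupDeriv hF x).aestronglyMeasurable
    (ae_restrict_of_forall_mem measurableSet_Ioi fun s hs y => hasDerivAt_heatSemigroup hs
      (by fun_prop) (fun _ => (abs_of_nonneg (huC _).1).trans_le (huC _).2) y)
    (ae_restrict_of_forall_mem measurableSet_Ioi fun s hs y =>
      abs_heatSemigroupDeriv_le hs (by fun_prop) (fun _ => huC _) y)
    (((integrableOn_abs_sub_div_sqrt (c₁ := c₁ * m₁) (c₂ := c₂ * m₂) hl₁ hl₂).const_mul C).congr
      (ae_of_all _ fun s => by ring)) |>.trans_eq ?_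
  rw [← integral_const_mul]
  congr 1 with s
  ring

end

theorem stmt_14_general (a b τ χ₁ χ₂ lam₁ lam₂ μ₁ μ₂ μ : ℝ)
    (ha : 0 < a) (hτ : 0 < τ)
    (hlam₁ : 0 < lam₁) (hlam₂ : 0 < lam₂)
    (hμ0 : 0 < μ)
    (hbig : b + χ₂ * μ₂ - χ₁ * μ₁ >
      Mbar χ₁ χ₂ lam₁ lam₂ μ₁ μ₂ + (μ + a / μ) * τ * Kconst χ₁ χ₂ lam₁ lam₂ μ₁ μ₂) :
    ∀ C₀ ≥ a / (b + χ₂ * μ₂ - χ₁ * μ₁ - Mbar χ₁ χ₂ lam₁ lam₂ μ₁ μ₂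
        - (μ + a / μ) * τ * Kconst χ₁ χ₂ lam₁ lam₂ μ₁ μ₂),
    ∀ μt : ℝ, μ < μt → μt < min (2 * μ) (Real.sqrt a) →
      (τ < 1 → (1 - τ) * μt ^ 2 < lam₁ + τ * a ∧ (1 - τ) * μt ^ 2 < lam₂ + τ * a) →
    ∀ d > max 1 (C₀ ^ ((μ - μt) / μ)),
    ∀ u : ℝ → ℝ, memE C₀ μ μt d u →
    ∀ x : ℝ,
      a + (χ₂ * lam₂ * Vfun a τ lam₂ μ₂ μ u x - χ₁ * lam₁ * Vfun a τ lam₁ μ₁ μ u x) +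
        (μ + a / μ) * τ *
          deriv (fun y => χ₁ * Vfun a τ lam₁ μ₁ μ u y - χ₂ * Vfun a τ lam₂ μ₂ μ u y) x -
        (b + χ₂ * μ₂ - χ₁ * μ₁) * C₀ ≤ 0 := by
  intro C₀ hC₀ μt _ _ _ d _ u ⟨hu, hU⟩ x
  have huC : ∀ z, u z ∈ Icc 0 C₀ := fun z =>
    ⟨(le_max_left _ _).trans (hU z).1, (hU z).2.trans (min_le_left _ _)⟩
  have hM : χ₂ * lam₂ * Vfun a τ lam₂ μ₂ μ u x - χ₁ * lam₁ * Vfun a τ lam₁ μ₁ μ u x ≤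
      Mbar χ₁ χ₂ lam₁ lam₂ μ₁ μ₂ * C₀ :=
    mul_Vfun_sub_mul_Vfun_le hlam₂ hlam₁ hu huC _ _ _ _ x
  have hK : deriv (fun y => χ₁ * Vfun a τ lam₁ μ₁ μ u y - χ₂ * Vfun a τ lam₂ μ₂ μ u y) x ≤
      C₀ * Kconst χ₁ χ₂ lam₁ lam₂ μ₁ μ₂ :=
    (le_abs_self _).trans (abs_deriv_mul_Vfun_sub_mul_Vfun_le hlam₁ hlam₂ hu huC _ _ _ _ x)
  have hcτ : 0 ≤ (μ + a / μ) * τ := by positivity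
  have hδ : 0 < b + χ₂ * μ₂ - χ₁ * μ₁ - Mbar χ₁ χ₂ lam₁ lam₂ μ₁ μ₂
      - (μ + a / μ) * τ * Kconst χ₁ χ₂ lam₁ lam₂ μ₁ μ₂ := by linarith
  have haC₀ := (div_le_iff₀ hδ).1 hC₀
  nlinarith [mul_le_mul_of_nonneg_left hK hcτ]

/-- Theorem 3.1(1): the constant C₀ ≥ C̃₀ is a super-solution. -/
theorem stmt_14 (a b τ χ₁ χ₂ lam₁ lam₂ μ₁ μ₂ μ : ℝ)
    (ha : 0 < a) (hb : 0 < b) (hτ : 0 < τ)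
    (hχ₁ : 0 < χ₁) (hχ₂ : 0 < χ₂) (hlam₁ : 0 < lam₁) (hlam₂ : 0 < lam₂)
    (hμ₁ : 0 < μ₁) (hμ₂ : 0 < μ₂)
    (hμ0 : 0 < μ) (hμa : μ < Real.sqrt a)
    (hτμ : τ < 1 → (1 - τ) * μ ^ 2 < lam₁ + τ * a ∧ (1 - τ) * μ ^ 2 < lam₂ + τ * a)
    (hbig : b + χ₂ * μ₂ - χ₁ * μ₁ >
      Mbar χ₁ χ₂ lam₁ lam₂ μ₁ μ₂ + (μ + a / μ) * τ * Kconst χ₁ χ₂ lam₁ lam₂ μ₁ μ₂) :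
    ∀ C₀ ≥ a / (b + χ₂ * μ₂ - χ₁ * μ₁ - Mbar χ₁ χ₂ lam₁ lam₂ μ₁ μ₂
        - (μ + a / μ) * τ * Kconst χ₁ χ₂ lam₁ lam₂ μ₁ μ₂),
    ∀ μt : ℝ, μ < μt → μt < min (2 * μ) (Real.sqrt a) →
      (τ < 1 → (1 - τ) * μt ^ 2 < lam₁ + τ * a ∧ (1 - τ) * μt ^ 2 < lam₂ + τ * a) →
    ∀ d > max 1 (C₀ ^ ((μ - μt) / μ)),
    ∀ u : ℝ → ℝ, memE C₀ μ μt d u →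
    ∀ x : ℝ,
      a + (χ₂ * lam₂ * Vfun a τ lam₂ μ₂ μ u x - χ₁ * lam₁ * Vfun a τ lam₁ μ₁ μ u x) +
        (μ + a / μ) * τ *
          deriv (fun y => χ₁ * Vfun a τ lam₁ μ₁ μ u y - χ₂ * Vfun a τ lam₂ μ₂ μ u y) x -
        (b + χ₂ * μ₂ - χ₁ * μ₁) * C₀ ≤ 0 :=
  stmt_14_general a b τ χ₁ χ₂ lam₁ lam₂ μ₁ μ₂ μ ha hτ hlam₁ hlam₂ hμ0 hbig
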